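/- Each of the embedded weight vectors b̃₇ = (0, 2/5, 0, 1/10, 0, 0, 0, 1/5, 3/10, 0)ᵀ and b̃₈ = (1/7, 0, 5/14, 0, 0, 0, 0, 3/14, 2/7, 0)ᵀ for the SSPERK(10,4) method satisfies all third-order conditions — wᵀe = 1, wᵀc = 1/2, wᵀc² = 1/3, and wᵀ(c²/2 − Ac) = 0 — and violates the fourth-order condition wᵀc³ = 1/4: specifically b̃₇ᵀc³ = 89/360 ≠ 1/4 and b̃₈ᵀc³ = 61/252 ≠ 1/4, where A and c are the SSPERK(10,4) coefficient matrix and abscissae. -/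

import Mathlib

/-
Every condition is a finite rational sum. The only one with structure is the tree condition
`wᵀ(c²/2 − Ac) = 0`: the stage-order residual of SSPERK(10,4) is
`c²/2 − Ac = (0, 1, 2, 3, 4, −4, −3, −2, −1, 0)/72`, and both embedded weight vectors are
orthogonal to it.
-/
open Matrix

/-- Coefficient matrix of the optimal SSPERK(10,4) method (zero-indexed):
for `j < i`, the entry is `1/6` if `i ≤ 4` or `j ≥ 5`, and `1/15` otherwise. -/
noncomputable def A104 : Matrix (Fin 10) (Fin 10) ℝ :=
  Matrix.of fun i j =>
    if (j : ℕ) < (i : ℕ) then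
      if (i : ℕ) ≤ 4 ∨ 5 ≤ (j : ℕ) then 1/6 else 1/15
    else 0

/-- Abscissae of the optimal SSPERK(10,4) method, `c = A·e`. -/
noncomputable def c104 : Fin 10 → ℝ := ![0, 1/6, 1/3, 1/2, 2/3, 1/3, 1/2, 2/3, 5/6, 1]

/-- Embedded weight vector `b̃₇` for SSPERK(10,4). -/
noncomputable def bt7 : Fin 10 → ℝ := ![0, 2/5, 0, 1/10, 0, 0, 0, 1/5, 3/10, 0]

/-- Embedded weight vector `b̃₈` for SSPERK(10,4). -/
noncomputable def bt8 : Fin 10 → ℝ := ![1/7, 0, 5/14, 0, 0, 0, 0, 3/14, 2/7, 0]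

def ThirdOrderConditions {ι : Type*} [Fintype ι] (A : Matrix ι ι ℝ) (c w : ι → ℝ) : Prop :=
  ∑ j, w j = 1 ∧ ∑ j, w j * c j = 1 / 2 ∧ ∑ j, w j * c j ^ 2 = 1 / 3 ∧
    ∑ j, w j * (c j ^ 2 / 2 - A.mulVec c j) = 0

theorem A104_mulVec_c104 :
    A104 *ᵥ c104 = ![0, 0, 1/36, 1/12, 1/6, 1/9, 1/6, 1/4, 13/36, 1/2] := by
  ext i
  fin_cases i <;>
    simp [A104, c104, mulVec, dotProduct, Fin.sum_univ_succ] <;> norm_num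

theorem c104_sq_div_two_sub_A104_mulVec (j : Fin 10) :
    c104 j ^ 2 / 2 - A104.mulVec c104 j =
      ![0, 1/72, 1/36, 1/24, 1/18, -1/18, -1/24, -1/36, -1/72, 0] j := by
  rw [A104_mulVec_c104]
  fin_cases j <;> simp [c104] <;> norm_num

theorem thirdOrderConditions_bt7 : ThirdOrderConditions A104 c104 bt7 := by
  simp only [ThirdOrderConditions, c104_sq_div_two_sub_A104_mulVec]
  simp [bt7, c104, Fin.sum_univ_succ]
  norm_num

theorem sum_bt7_mul_c104_pow_three : ∑ j, bt7 j * c104 j ^ 3 = 89 / 360 := by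
  simp [bt7, c104, Fin.sum_univ_succ]
  norm_num

theorem thirdOrderConditions_bt8 : ThirdOrderConditions A104 c104 bt8 := by
  simp only [ThirdOrderConditions, c104_sq_div_two_sub_A104_mulVec]
  simp [bt8, c104, Fin.sum_univ_succ]
  norm_num

theorem sum_bt8_mul_c104_pow_three : ∑ j, bt8 j * c104 j ^ 3 = 61 / 252 := by
  simp [bt8, c104, Fin.sum_univ_succ]
  norm_num

/-- Both embedded weight vectors `b̃₇` and `b̃₈` for SSPERK(10,4) satisfy all
third-order conditions and violate the fourth-order condition `wᵀc³ = 1/4`: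
`b̃₇ᵀc³ = 89/360 ≠ 1/4` and `b̃₈ᵀc³ = 61/252 ≠ 1/4`. -/
theorem ssperk104_embedded_bt7_bt8_third_order_not_fourth :
    ((∑ j : Fin 10, bt7 j = 1) ∧
     (∑ j : Fin 10, bt7 j * c104 j = 1 / 2) ∧
     (∑ j : Fin 10, bt7 j * (c104 j) ^ 2 = 1 / 3) ∧
     (∑ j : Fin 10, bt7 j * ((c104 j) ^ 2 / 2 - A104.mulVec c104 j) = 0) ∧
     (∑ j : Fin 10, bt7 j * (c104 j) ^ 3 = 89 / 360) ∧
     ((89 : ℝ) / 360 ≠ 1 / 4)) ∧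
    ((∑ j : Fin 10, bt8 j = 1) ∧
     (∑ j : Fin 10, bt8 j * c104 j = 1 / 2) ∧
     (∑ j : Fin 10, bt8 j * (c104 j) ^ 2 = 1 / 3) ∧
     (∑ j : Fin 10, bt8 j * ((c104 j) ^ 2 / 2 - A104.mulVec c104 j) = 0) ∧
     (∑ j : Fin 10, bt8 j * (c104 j) ^ 3 = 61 / 252) ∧
     ((61 : ℝ) / 252 ≠ 1 / 4)) := by
  obtain ⟨h7e, h7c, h7c2, h7tree⟩ := thirdOrderConditions_bt7
  obtain ⟨h8e, h8c, h8c2, h8tree⟩ := thirdOrderConditions_bt8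
  exact ⟨⟨h7e, h7c, h7c2, h7tree, sum_bt7_mul_c104_pow_three, by norm_num⟩,
    ⟨h8e, h8c, h8c2, h8tree, sum_bt8_mul_c104_pow_three, by norm_num⟩⟩
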